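/- arXiv:1007.4191 — 3 statements merged into one kernel-verified Lean document; each statement's English description precedes it below -/
import Mathlib

section
/- Let x ∈ ℝⁿ, let t ≥ 2 be a real number, and let z be a uniformly random vector in {-1,1}ⁿ with independent coordinates. Then E[|⟨x,z⟩|^t] ≤ ‖x‖₂^t · t^{t/2}. -/
/-!
Exponential-moment method. For every `l > 0` the tangent-line bound `v ≤ e^(v-1)` at
`v = l|u|/t` gives `|u|^t ≤ 2 (t/l)^t e^(-t) cosh(lu)`. Averaged over the signs, `cosh` of a
Rademacher sum factors into `∏ cosh(l xᵢ) ≤ exp(l² ‖x‖² / 2)`. The choice `l = √t / ‖x‖` turns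
this into `‖x‖^t t^(t/2) · 2e^(-t/2)`, and `2e^(-t/2) ≤ 1` as soon as `t ≥ 2`.
-/

open Real Finset

lemma rpow_le_div_rpow_mul_exp {u l t : ℝ} (hu : 0 ≤ u) (hl : 0 < l) (ht : 0 < t) :
    u ^ t ≤ (t / l) ^ t * exp (l * u - t) := by
  have hv : 0 ≤ l * u / t := by positivity
  calc u ^ t = (t / l) ^ t * (l * u / t) ^ t := by
        rw [← mul_rpow (by positivity) hv]
        congr 1
        field_simp
    _ ≤ (t / l) ^ t * exp (l * u / t - 1) ^ t := by
        gcongr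
        linarith [add_one_le_exp (l * u / t - 1)]
    _ = (t / l) ^ t * exp (l * u - t) := by
        rw [← exp_mul]
        congr 2
        field_simp

lemma abs_rpow_le_mul_cosh {u l t : ℝ} (hl : 0 < l) (ht : 0 < t) :
    |u| ^ t ≤ 2 * (t / l) ^ t * exp (-t) * cosh (l * u) := by
  have hexp : exp (l * |u|) ≤ 2 * cosh (l * u) := by
    rw [← cosh_abs (l * u), abs_mul, abs_of_pos hl, cosh_eq]
    linarith [exp_pos (-(l * |u|))]
  calc |u| ^ t ≤ (t / l) ^ t * exp (l * |u| - t) := rpow_le_div_rpow_mul_exp (abs_nonneg u) hl ht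
    _ = (t / l) ^ t * exp (-t) * exp (l * |u|) := by rw [sub_eq_neg_add, exp_add, mul_assoc]
    _ ≤ (t / l) ^ t * exp (-t) * (2 * cosh (l * u)) := by gcongr
    _ = 2 * (t / l) ^ t * exp (-t) * cosh (l * u) := by ring

lemma div_div_sqrt_rpow {σ t : ℝ} (hσ : 0 ≤ σ) (ht : 0 ≤ t) :
    (t / (sqrt t / σ)) ^ t = σ ^ t * t ^ (t / 2) := by
  rw [div_div_eq_mul_div, mul_comm t, mul_div_assoc, div_sqrt, mul_rpow hσ (sqrt_nonneg t),
    sqrt_eq_rpow, ← rpow_mul ht, one_div_mul_eq_div]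

lemma two_mul_exp_neg_mul_exp_half_le_one {t : ℝ} (ht : 2 ≤ t) :
    2 * exp (-t) * exp (t / 2) ≤ 1 := by
  rw [mul_assoc, ← exp_add, show -t + t / 2 = -(t / 2) by ring, exp_neg, ← div_eq_mul_inv,
    div_le_one (exp_pos _)]
  linarith [add_one_le_exp (t / 2)]

section SignSums

variable {ι : Type*} [Fintype ι]

lemma prod_cosh_le_exp_sum_sq (y : ι → ℝ) : ∏ i, cosh (y i) ≤ exp (∑ i, y i ^ 2 / 2) := by
  rw [exp_sum]
  exact prod_le_prod (fun i _ => (cosh_pos _).le) fun i _ => cosh_le_exp_half_sq (y i)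

variable [DecidableEq ι]

lemma sum_exp_sum_mul_sign (y : ι → ℝ) :
    ∑ z : ι → Bool, exp (∑ i, y i * (if z i then (1:ℝ) else -1)) =
      2 ^ Fintype.card ι * ∏ i, cosh (y i) := by
  simp_rw [exp_sum]
  rw [← Fintype.prod_sum fun i (b : Bool) => exp (y i * if b then 1 else -1), ← card_univ,
    ← prod_const, ← prod_mul_distrib]
  refine prod_congr rfl fun i _ => ?_
  simp [cosh_eq]
  ring

lemma sum_cosh_sum_mul_sign (y : ι → ℝ) :
    ∑ z : ι → Bool, cosh (∑ i, y i * (if z i then (1:ℝ) else -1)) =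
      2 ^ Fintype.card ι * ∏ i, cosh (y i) := by
  have hneg := sum_exp_sum_mul_sign (fun i => -y i)
  simp only [neg_mul, sum_neg_distrib, cosh_neg] at hneg
  simp only [cosh_eq, ← sum_div, sum_add_distrib, sum_exp_sum_mul_sign, hneg]
  ring

lemma sum_abs_sum_mul_sign_rpow_le (x : ι → ℝ) {l t : ℝ} (hl : 0 < l) (ht : 0 < t) :
    ∑ z : ι → Bool, |∑ i, x i * (if z i then (1:ℝ) else -1)| ^ t ≤
      2 ^ Fintype.card ι * (2 * (t / l) ^ t * exp (-t) * exp (l ^ 2 * (∑ i, x i ^ 2) / 2)) := by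
  calc ∑ z : ι → Bool, |∑ i, x i * (if z i then (1:ℝ) else -1)| ^ t
      ≤ ∑ z : ι → Bool, 2 * (t / l) ^ t * exp (-t) *
          cosh (∑ i, l * x i * (if z i then (1:ℝ) else -1)) := by
        refine sum_le_sum fun z _ => ?_
        simp_rw [mul_assoc l, ← mul_sum]
        exact abs_rpow_le_mul_cosh hl ht
    _ = 2 * (t / l) ^ t * exp (-t) * (2 ^ Fintype.card ι * ∏ i, cosh (l * x i)) := by
        rw [← mul_sum, sum_cosh_sum_mul_sign]
    _ ≤ 2 * (t / l) ^ t * exp (-t) * (2 ^ Fintype.card ι * exp (l ^ 2 * (∑ i, x i ^ 2) / 2)) := by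
        gcongr
        calc ∏ i, cosh (l * x i) ≤ exp (∑ i, (l * x i) ^ 2 / 2) := prod_cosh_le_exp_sum_sq _
          _ = exp (l ^ 2 * (∑ i, x i ^ 2) / 2) := by
            rw [mul_sum, sum_div]
            exact congrArg exp (sum_congr rfl fun i _ => by ring)
    _ = _ := by ring

end SignSums

/-- Khintchine inequality: for `x ∈ ℝⁿ`, real `t ≥ 2`, and a uniformly random sign
vector `z ∈ {-1,1}ⁿ` (independent uniform coordinates, formalized as averaging over
all `2^n` sign patterns), `E[|⟨x,z⟩|^t] ≤ ‖x‖₂^t · t^(t/2)`. -/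
theorem khintchine (n : ℕ) (x : Fin n → ℝ) (t : ℝ) (ht : 2 ≤ t) :
    (∑ z : Fin n → Bool, |∑ i, x i * (if z i then (1:ℝ) else -1)| ^ t) / 2 ^ n
      ≤ (Real.sqrt (∑ i, (x i) ^ 2)) ^ t * t ^ (t / 2) := by
  have ht0 : 0 < t := by linarith
  rcases (sum_nonneg fun i _ => sq_nonneg (x i) : 0 ≤ ∑ i, x i ^ 2).eq_or_lt with hs | hs
  · have hx : ∀ i, x i = 0 := by
      simpa [sum_eq_zero_iff_of_nonneg, sq_nonneg] using hs.symm
    simp only [hx, zero_mul, sum_const_zero, abs_zero, zero_rpow ht0.ne', zero_div]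
    positivity
  set σ := sqrt (∑ i, x i ^ 2) with hσ_def
  have hσ : 0 < σ := sqrt_pos.2 hs
  have hmoment := sum_abs_sum_mul_sign_rpow_le x (by positivity : 0 < sqrt t / σ) ht0
  have hexponent : (sqrt t / σ) ^ 2 * (∑ i, x i ^ 2) / 2 = t / 2 := by
    rw [div_pow, sq_sqrt ht0.le, hσ_def, sq_sqrt hs.le]
    field_simp
  rw [Fintype.card_fin, hexponent, div_div_sqrt_rpow hσ.le ht0.le] at hmoment
  rw [div_le_iff₀ (by positivity)]
  calc _ ≤ _ := hmoment
    _ = σ ^ t * t ^ (t / 2) * (2 * exp (-t) * exp (t / 2)) * 2 ^ n := by ring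
    _ ≤ σ ^ t * t ^ (t / 2) * 1 * 2 ^ n := by gcongr; exact two_mul_exp_neg_mul_exp_half_le_one ht
    _ = σ ^ t * t ^ (t / 2) * 2 ^ n := by rw [mul_one]
end

section
/- Let x ∈ ℝⁿ, let λ > 0 be such that λ² is a positive multiple of 8, and let z ∈ {-1,1}ⁿ be drawn from a (λ²/4)-wise independent family of uniform random signs. Then Pr[|⟨x,z⟩| > λ‖x‖₂] < 2^{-λ²/4}. -/
/-!
Expanding `S = ∑ xᵢ zᵢ` by the multinomial theorem, the `2m`-th moment of `S` only involves
products of at most `2m` of the signs, so `2m`-wise independence computes it exactly as for fully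
independent signs: a monomial survives iff every exponent is even. Comparing multinomial
coefficients, `multinomial (2b) ≤ (2m-1)‼ · multinomial b`, gives the Khintchine bound
`E[S^{2m}] ≤ (2m-1)‼ ‖x‖₂^{2m}`. Markov's inequality for `S^{2m}` with `λ² = 8m` then bounds the
tail by `(2m-1)‼ / (8m)^m < (2m)^m / (8m)^m = 2^{-2m}`.
-/

open MeasureTheory ProbabilityTheory Finset
open scoped Nat

namespace Nat

theorem doubleFactorial_two_mul_sub_one_lt_pow {m : ℕ} (hm : 0 < m) :
    (2 * m - 1)‼ < (2 * m) ^ m := by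
  induction m with
  | zero => omega
  | succ m ih =>
    rcases Nat.eq_zero_or_pos m with rfl | hm'
    · decide
    · rw [show 2 * (m + 1) - 1 = 2 * m - 1 + 2 by omega, doubleFactorial_add_two]
      calc (2 * m - 1 + 2) * (2 * m - 1)‼ < (2 * m + 2) * (2 * m) ^ m :=
            Nat.mul_lt_mul_of_le_of_lt (by omega) (ih hm') (by omega)
        _ ≤ (2 * m + 2) * (2 * m + 2) ^ m := by gcongr; omega
        _ = (2 * (m + 1)) ^ (m + 1) := by ring

theorem factorial_two_mul (m : ℕ) : (2 * m)! = 2 ^ m * m ! * (2 * m - 1)‼ := by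
  rcases m with _ | m
  · rfl
  · rw [show 2 * (m + 1) = 2 * m + 1 + 1 by ring, factorial_eq_mul_doubleFactorial,
      show 2 * m + 1 + 1 - 1 = 2 * m + 1 by omega, show 2 * m + 1 + 1 = 2 * (m + 1) by ring,
      doubleFactorial_two_mul]

theorem multinomial_two_mul_le {ι : Type*} (s : Finset ι) (b : ι → ℕ) :
    multinomial s (2 • b) ≤ (2 * ∑ i ∈ s, b i - 1)‼ * multinomial s b := by
  generalize hM : ∑ i ∈ s, b i = M
  have hpow : 2 ^ M * ∏ i ∈ s, (b i)! ≤ ∏ i ∈ s, (2 * b i)! := by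
    rw [← hM, ← prod_pow_eq_pow_sum, ← prod_mul_distrib]
    exact prod_le_prod' fun i _ => (doubleFactorial_two_mul (b i)).symm.trans_le
      (doubleFactorial_le_factorial _)
  refine Nat.le_of_mul_le_mul_right ?_ (by positivity : 0 < 2 ^ M * ∏ i ∈ s, (b i)!)
  calc multinomial s (2 • b) * (2 ^ M * ∏ i ∈ s, (b i)!)
      ≤ (∏ i ∈ s, (2 * b i)!) * multinomial s (2 • b) := by rw [mul_comm]; gcongr
    _ = (2 * M)! := by
        have h := multinomial_spec s (2 • b)
        simp only [Pi.smul_apply, smul_eq_mul, ← mul_sum, hM] at h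
        exact h
    _ = (2 * M - 1)‼ * multinomial s b * (2 ^ M * ∏ i ∈ s, (b i)!) := by
        rw [factorial_two_mul, ← hM, ← multinomial_spec s b]; ring

end Nat

theorem sum_even_multinomial_mul_prod_pow_le {ι : Type*} [Fintype ι] [DecidableEq ι]
    (x : ι → ℝ) (m : ℕ) :
    ∑ a ∈ (piAntidiag univ (2 * m)).filter (fun a => ∀ i, Even (a i)),
        (Nat.multinomial univ a : ℝ) * ∏ i, x i ^ a i ≤
      (2 * m - 1)‼ * (∑ i, x i ^ 2) ^ m := by
  simp_rw [even_iff_two_dvd]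
  rw [← map_nsmul_piAntidiag_univ m two_ne_zero, sum_map, sum_pow_eq_sum_piAntidiag, mul_sum]
  refine sum_le_sum fun b hb => ?_
  have hpow : ∏ i, x i ^ (2 • b) i = ∏ i, (x i ^ 2) ^ b i := by
    simp only [Pi.smul_apply, smul_eq_mul, pow_mul]
  have hmult : (Nat.multinomial univ (2 • b) : ℝ) ≤ (2 * m - 1)‼ * Nat.multinomial univ b := by
    exact_mod_cast (mem_piAntidiag.mp hb).1 ▸ Nat.multinomial_two_mul_le univ b
  rw [Function.Embedding.coeFn_mk, hpow, ← mul_assoc]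
  gcongr

section RandomSigns

variable {Ω ι : Type*} [MeasurableSpace Ω] {μ : Measure Ω}

def KWiseIndepFun {β : Type*} [MeasurableSpace β] (k : ℕ) (X : ι → Ω → β) (μ : Measure Ω) :
    Prop :=
  ∀ S : Finset ι, S.card ≤ k → iIndepFun (fun i : S => X i) μ

theorem measureReal_lt_abs_le_integral_pow_div [IsFiniteMeasure μ] {f : Ω → ℝ} {a : ℝ}
    (ha : 0 < a) {p : ℕ} (hp : Even p) (hf : Integrable (fun ω => f ω ^ p) μ) :
    μ.real {ω | a < |f ω|} ≤ (∫ ω, f ω ^ p ∂μ) / a ^ p := by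
  rw [le_div_iff₀ (pow_pos ha p), mul_comm]
  calc a ^ p * μ.real {ω | a < |f ω|} ≤ a ^ p * μ.real {ω | a ^ p ≤ f ω ^ p} := by
        refine mul_le_mul_of_nonneg_left (measureReal_mono fun ω hω => ?_) (by positivity)
        show a ^ p ≤ f ω ^ p
        rw [← hp.pow_abs (f ω)]
        exact pow_le_pow_left₀ ha.le (le_of_lt hω) p
    _ ≤ ∫ ω, f ω ^ p ∂μ :=
        mul_meas_ge_le_integral_of_nonneg (ae_of_all _ fun ω => hp.pow_nonneg _) hf _

variable [IsProbabilityMeasure μ]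

theorem integral_eq_zero_of_sign {g : Ω → ℝ} (hg : Measurable g)
    (hs : ∀ ω, g ω = 1 ∨ g ω = -1) (hu : μ {ω | g ω = 1} = 1 / 2) : ∫ ω, g ω ∂μ = 0 := by
  have hA : MeasurableSet {ω | g ω = 1} := hg (measurableSet_singleton 1)
  have hg_eq : ∀ ω, g ω = {ω | g ω = 1}.indicator (fun _ => (2 : ℝ)) ω - 1 := fun ω => by
    rcases hs ω with h | h <;> norm_num [Set.indicator, h]
  rw [integral_congr_ae (ae_of_all _ hg_eq),
    integral_sub ((integrable_const _).indicator hA) (integrable_const 1),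
    integral_indicator_const _ hA, measureReal_def, hu]
  norm_num

theorem integral_pow_of_sign {g : Ω → ℝ} (hg : Measurable g)
    (hs : ∀ ω, g ω = 1 ∨ g ω = -1) (hu : μ {ω | g ω = 1} = 1 / 2) (c : ℕ) :
    ∫ ω, g ω ^ c ∂μ = if Even c then 1 else 0 := by
  split_ifs with hc
  · have h1 : ∀ ω, g ω ^ c = 1 := fun ω => by
      rcases hs ω with h | h <;> simp [h, hc.neg_one_pow]
    simp [h1]
  · have hid : ∀ ω, g ω ^ c = g ω := fun ω => by
      rcases hs ω with h | h <;> simp [h, (Nat.not_even_iff_odd.mp hc).neg_one_pow]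
    simp only [hid]
    exact integral_eq_zero_of_sign hg hs hu

variable [Fintype ι]

theorem KWiseIndepFun.integral_prod_pow {k : ℕ} {X : ι → Ω → ℝ} (hX : KWiseIndepFun k X μ)
    (hm : ∀ i, Measurable (X i)) (a : ι → ℕ) (ha : ∑ i, a i ≤ k) :
    ∫ ω, ∏ i, X i ω ^ a i ∂μ = ∏ i, ∫ ω, X i ω ^ a i ∂μ := by
  classical
  set T := univ.filter fun i => a i ≠ 0
  have hT : T.card ≤ k := calc
    T.card ≤ ∑ i ∈ T, a i := by
      simpa using card_nsmul_le_sum T a 1 fun i hi =>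
        Nat.one_le_iff_ne_zero.mpr (mem_filter.mp hi).2
    _ ≤ ∑ i, a i := sum_le_sum_of_subset (subset_univ T)
    _ ≤ k := ha
  have hoff : ∀ i ∉ T, a i = 0 := fun i hi => by simpa [T] using hi
  have hindepT : iIndepFun (fun i : T => fun ω => X i ω ^ a i) μ :=
    (hX T hT).comp (fun i (r : ℝ) => r ^ a i) fun i => measurable_id.pow_const _
  calc ∫ ω, ∏ i, X i ω ^ a i ∂μ = ∫ ω, ∏ i : T, X i ω ^ a i ∂μ := by
        congr with ω
        rw [prod_coe_sort T fun i => X i ω ^ a i]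
        exact (prod_subset (subset_univ T) fun i _ hi => by simp [hoff i hi]).symm
    _ = ∏ i : T, ∫ ω, X i ω ^ a i ∂μ :=
        hindepT.integral_fun_prod_eq_prod_integral
          fun i => ((hm i).pow_const _).aestronglyMeasurable
    _ = ∏ i, ∫ ω, X i ω ^ a i ∂μ := by
        rw [prod_coe_sort T fun i => ∫ ω, X i ω ^ a i ∂μ]
        exact prod_subset (subset_univ T) fun i _ hi => by simp [hoff i hi]

variable {z : ι → Ω → ℝ} (hm : ∀ i, Measurable (z i)) (hs : ∀ i ω, z i ω = 1 ∨ z i ω = -1)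
include hm hs

theorem integrable_prod_pow_of_sign (a : ι → ℕ) :
    Integrable (fun ω => ∏ i, z i ω ^ a i) μ := by
  refine .of_bound (by fun_prop) 1 (ae_of_all _ fun ω => ?_)
  rw [Real.norm_eq_abs, abs_prod]
  exact prod_le_one (fun i _ => abs_nonneg _) fun i _ => by
    rcases hs i ω with h | h <;> simp [h]

theorem KWiseIndepFun.integral_prod_pow_of_sign {k : ℕ} (hX : KWiseIndepFun k z μ)
    (hu : ∀ i, μ {ω | z i ω = 1} = 1 / 2) (a : ι → ℕ) (ha : ∑ i, a i ≤ k) :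
    ∫ ω, ∏ i, z i ω ^ a i ∂μ = if ∀ i, Even (a i) then 1 else 0 := by
  simp [hX.integral_prod_pow hm a ha, integral_pow_of_sign (hm _) (hs _) (hu _), prod_boole]

theorem KWiseIndepFun.integral_sum_mul_pow_eq [DecidableEq ι] {k p : ℕ}
    (hX : KWiseIndepFun k z μ)
    (hu : ∀ i, μ {ω | z i ω = 1} = 1 / 2) (hp : p ≤ k) (x : ι → ℝ) :
    ∫ ω, (∑ i, x i * z i ω) ^ p ∂μ =
      ∑ a ∈ (piAntidiag univ p).filter fun a => ∀ i, Even (a i),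
        (Nat.multinomial univ a : ℝ) * ∏ i, x i ^ a i := by
  have hexpand : ∀ ω, (∑ i, x i * z i ω) ^ p = ∑ a ∈ piAntidiag univ p,
      ((Nat.multinomial univ a : ℝ) * ∏ i, x i ^ a i) * ∏ i, z i ω ^ a i := fun ω => by
    simp only [sum_pow_eq_sum_piAntidiag, mul_pow, prod_mul_distrib, mul_assoc]
  simp_rw [hexpand]
  rw [integral_finsetSum _ fun a _ => (integrable_prod_pow_of_sign hm hs a).const_mul _,
    sum_filter]
  refine sum_congr rfl fun a ha => ?_
  rw [integral_const_mul,
    hX.integral_prod_pow_of_sign hm hs hu a ((mem_piAntidiag.mp ha).1 ▸ hp), mul_ite, mul_one,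
    mul_zero]

theorem integrable_sum_mul_pow_of_sign (x : ι → ℝ) (p : ℕ) :
    Integrable (fun ω => (∑ i, x i * z i ω) ^ p) μ := by
  refine .of_bound (by fun_prop) ((∑ i, |x i|) ^ p) (ae_of_all _ fun ω => ?_)
  rw [norm_pow, Real.norm_eq_abs]
  gcongr
  calc |∑ i, x i * z i ω| ≤ ∑ i, |x i * z i ω| := abs_sum_le_sum_abs _ _
    _ = ∑ i, |x i| := sum_congr rfl fun i _ => by rcases hs i ω with h | h <;> simp [h]

theorem KWiseIndepFun.integral_sum_mul_pow_le {m : ℕ} (hX : KWiseIndepFun (2 * m) z μ)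
    (hu : ∀ i, μ {ω | z i ω = 1} = 1 / 2) (x : ι → ℝ) :
    ∫ ω, (∑ i, x i * z i ω) ^ (2 * m) ∂μ ≤ (2 * m - 1)‼ * (∑ i, x i ^ 2) ^ m := by
  classical
  rw [hX.integral_sum_mul_pow_eq hm hs hu le_rfl x]
  exact sum_even_multinomial_mul_prod_pow_le x m

theorem KWiseIndepFun.measureReal_lt_abs_sum_mul_le {m : ℕ} (hX : KWiseIndepFun (2 * m) z μ)
    (hu : ∀ i, μ {ω | z i ω = 1} = 1 / 2) (x : ι → ℝ) {c : ℝ} (hc : 0 < c) :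
    μ.real {ω | c * Real.sqrt (∑ i, x i ^ 2) < |∑ i, x i * z i ω|} ≤
      (2 * m - 1)‼ / c ^ (2 * m) := by
  rcases (sum_nonneg fun i _ => sq_nonneg (x i) : 0 ≤ ∑ i, x i ^ 2).eq_or_lt with hσ | hσ
  · have hx : ∀ i, x i = 0 := fun i => by
      simpa using (sum_eq_zero_iff_of_nonneg fun i _ => sq_nonneg (x i)).mp hσ.symm i (mem_univ i)
    have hempty : {ω | c * Real.sqrt (∑ i, x i ^ 2) < |∑ i, x i * z i ω|} = ∅ := by simp [hx]
    rw [hempty, measureReal_empty]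
    positivity
  set σ2 := ∑ i, x i ^ 2
  calc μ.real {ω | c * Real.sqrt σ2 < |∑ i, x i * z i ω|}
      ≤ (∫ ω, (∑ i, x i * z i ω) ^ (2 * m) ∂μ) / (c * Real.sqrt σ2) ^ (2 * m) :=
        measureReal_lt_abs_le_integral_pow_div (by positivity) (even_two_mul m)
          (integrable_sum_mul_pow_of_sign hm hs x _)
    _ ≤ (2 * m - 1)‼ * σ2 ^ m / (c ^ (2 * m) * σ2 ^ m) := by
        rw [mul_pow, pow_mul (Real.sqrt σ2), Real.sq_sqrt hσ.le]
        gcongr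
        exact hX.integral_sum_mul_pow_le hm hs hu x
    _ = (2 * m - 1)‼ / c ^ (2 * m) := mul_div_mul_right _ _ (by positivity)

end RandomSigns

/-- Tail bound from bounded-independence Khintchine: if `λ > 0` with `λ²` a positive
multiple of `8`, and `z₁,…,zₙ` are uniform `±1` random variables that are
`(λ²/4)`-wise independent, then `Pr[|⟨x,z⟩| > λ‖x‖₂] < 2^{-λ²/4}`. -/
theorem khintchine_tail {Ω : Type} [MeasureSpace Ω] [IsProbabilityMeasure (ℙ : Measure Ω)]
    (n : ℕ) (x : Fin n → ℝ) (lam : ℝ) (hlam : 0 < lam)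
    (hmult : ∃ m : ℕ, 0 < m ∧ lam ^ 2 = 8 * m)
    (k : ℕ) (hk : (k : ℝ) = lam ^ 2 / 4)
    (z : Fin n → Ω → ℝ) (hmeas : ∀ i, Measurable (z i))
    (hsign : ∀ i, ∀ ω, z i ω = 1 ∨ z i ω = -1)
    (hunif : ∀ i, ℙ {ω | z i ω = 1} = 1 / 2)
    (hindep : ∀ S : Finset (Fin n), S.card ≤ k →
      iIndepFun
        (fun i : S => z i) ℙ) :
    (ℙ {ω | lam * Real.sqrt (∑ i, (x i) ^ 2) < |∑ i, x i * z i ω|}).toReal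
      < 2 ^ (-(lam ^ 2) / 4) := by
  obtain ⟨m, hm, hlm⟩ := hmult
  obtain rfl : k = 2 * m := by
    exact_mod_cast hk.trans (by rw [hlm]; push_cast; ring : lam ^ 2 / 4 = ((2 * m : ℕ) : ℝ))
  have hrhs : (2 : ℝ) ^ (-(lam ^ 2) / 4) = ((4 : ℝ) ^ m)⁻¹ := by
    rw [hlm, show -(8 * (m : ℝ)) / 4 = -((2 * m : ℕ) : ℝ) by push_cast; ring,
      Real.rpow_neg zero_le_two, Real.rpow_natCast, pow_mul]
    norm_num
  calc (ℙ {ω | lam * Real.sqrt (∑ i, x i ^ 2) < |∑ i, x i * z i ω|}).toReal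
      ≤ (2 * m - 1)‼ / lam ^ (2 * m) :=
        KWiseIndepFun.measureReal_lt_abs_sum_mul_le hmeas hsign hindep hunif x hlam
    _ = (2 * m - 1)‼ / (4 ^ m * (2 * m) ^ m) := by
        rw [pow_mul, hlm, ← mul_pow]
        ring_nf
    _ < (2 * m) ^ m / (4 ^ m * (2 * m) ^ m) := by
        gcongr
        exact_mod_cast Nat.doubleFactorial_two_mul_sub_one_lt_pow hm
    _ = 2 ^ (-(lam ^ 2) / 4) := by
        rw [hrhs]
        field_simp
end

section
/- Let 0 < p < 2 and let z ∈ ℂ satisfy |z| ≤ 1/2. Then for any positive integer d, |(1+z)^p − ∑_{k=0}^{d} C(p,k) z^k| ≤ |C(p,d+1)| · 2 · (1/2)^{d+1}, where (1+z)^p = exp(p·log(1+z)) with the principal logarithm and C(p,k) is the generalized binomial coefficient. In particular, since |C(p,d+1)| < 1 for 0 < p < 2, the truncation error is at most 2^{-d}. -/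
/-!
Mathlib's binomial series gives `(1 + z) ^ p = ∑ C(p,k) z^k` on the open unit disk. The ratio
`|C(p,k+1) / C(p,k)| = |p - k| / (k + 1)` is at most `1` as soon as `p ≤ 2k + 1`, so for `‖z‖ ≤ 1/2`
the tail after degree `d` is dominated by `|C(p,d+1)|` times a geometric series of ratio `1/2`;
finally `|C(p,d+1)| ≤ |C(p,2)| = |p(p-1)|/2 ≤ 1` for `0 < p < 2`.
-/

open scoped BigOperators

/-- The generalized binomial coefficient `C(p,k) = (∏_{j=0}^{k-1}(p−j))/k!`. -/
noncomputable def genBinom (p : ℝ) (k : ℕ) : ℝ :=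
  (∏ j ∈ Finset.range k, (p - j)) / (Nat.factorial k)

open Finset

theorem genBinom_eq_choose (p : ℝ) (k : ℕ) : genBinom p k = Ring.choose p k := by
  rw [genBinom, Ring.choose_eq_smul, smul_eq_mul, ← Polynomial.aeval_eq_smeval,
    ← descPochhammer_eval_eq_prod_range, ← descPochhammer_map (algebraMap ℤ ℝ),
    Polynomial.eval_map_algebraMap, div_eq_inv_mul]

theorem genBinom_two (p : ℝ) : genBinom p 2 = p * (p - 1) / 2 := by
  simp [genBinom, prod_range_succ]

theorem genBinom_succ (p : ℝ) (k : ℕ) :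
    genBinom p (k + 1) = (p - k) / (k + 1) * genBinom p k := by
  simp only [genBinom, prod_range_succ, Nat.factorial_succ, Nat.cast_mul, Nat.cast_succ]
  field_simp

theorem abs_genBinom_succ_le {p : ℝ} {k : ℕ} (hp : -1 ≤ p) (hpk : p ≤ 2 * k + 1) :
    |genBinom p (k + 1)| ≤ |genBinom p k| := by
  have hk : (0 : ℝ) < k + 1 := by positivity
  have hratio : |p - k| / (k + 1) ≤ 1 := by
    rw [div_le_one hk, abs_le]
    constructor <;> linarith
  rw [genBinom_succ, abs_mul, abs_div, abs_of_pos hk]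
  exact mul_le_of_le_one_left (abs_nonneg _) hratio

theorem abs_genBinom_le_of_le {p : ℝ} {m k : ℕ} (hp : -1 ≤ p) (hpm : p ≤ 2 * m + 1)
    (hmk : m ≤ k) : |genBinom p k| ≤ |genBinom p m| := by
  induction k, hmk using Nat.le_induction with
  | base => rfl
  | succ k hmk ih =>
    have hpk : p ≤ 2 * k + 1 := hpm.trans (by gcongr)
    exact (abs_genBinom_succ_le hp hpk).trans ih

theorem abs_genBinom_two_le_one {p : ℝ} (hp : -1 ≤ p) (hp2 : p ≤ 2) : |genBinom p 2| ≤ 1 := by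
  rw [genBinom_two, abs_div, abs_two, div_le_one two_pos, abs_le]
  constructor <;> nlinarith [sq_nonneg (p - 1 / 2)]

theorem hasSum_genBinom_mul_pow (p : ℝ) {z : ℂ} (hz : ‖z‖ < 1) :
    HasSum (fun k => (genBinom p k : ℂ) * z ^ k) (Complex.exp (p * Complex.log (1 + z))) := by
  have hsum := Complex.one_add_cpow_hasFPowerSeriesOnBall_zero (a := (p : ℂ)).hasSum
    (y := z) (by simpa [enorm_eq_nnnorm, ← NNReal.coe_lt_one] using hz)
  have hne : 1 + z ≠ 0 := Complex.slitPlane_ne_zero (Complex.mem_slitPlane_of_norm_lt_one hz)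
  rw [zero_add, Complex.cpow_def_of_ne_zero hne, mul_comm] at hsum
  refine hsum.congr_fun fun k => ?_
  simp [genBinom_eq_choose, Complex.ofReal_choose, binomialSeries, mul_comm]

theorem norm_sub_sum_range_le_of_hasSum {E : Type*} [SeminormedAddCommGroup E] {f : ℕ → E} {s : E}
    (hf : HasSum f s) {n : ℕ} {C r : ℝ} (hr : r < 1) (hbound : ∀ k, n ≤ k → ‖f k‖ ≤ C * r ^ k) :
    ‖s - ∑ k ∈ range n, f k‖ ≤ C * r ^ n / (1 - r) := by
  have htail : HasSum (fun k => f (k + n)) (s - ∑ k ∈ range n, f k) :=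
    (hasSum_nat_add_iff' n).mpr hf
  have hbound' (k : ℕ) : ‖f (k + n)‖ ≤ C * r ^ n * r ^ k := by
    rw [mul_assoc, ← pow_add, add_comm n]
    exact hbound _ (Nat.le_add_left n k)
  have := norm_sub_le_of_geometric_bound_of_hasSum hr hbound' htail 0
  rwa [range_zero, sum_empty, zero_sub, norm_neg, pow_zero, mul_one] at this

/-- Taylor truncation error for `(1+z)^p` with `0 < p < 2` and `|z| ≤ 1/2`: the error
after the degree-`d` partial sum is at most `|C(p,d+1)|·2·(1/2)^{d+1}`, and in
particular at most `2^{-d}`. -/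
theorem binomial_truncation (p : ℝ) (hp : 0 < p) (hp2 : p < 2) (z : ℂ)
    (hz : ‖z‖ ≤ 1 / 2) (d : ℕ) (hd : 1 ≤ d) :
    ‖Complex.exp ((p : ℂ) * Complex.log (1 + z))
        - ∑ k ∈ Finset.range (d + 1), (genBinom p k : ℂ) * z ^ k‖
      ≤ |genBinom p (d + 1)| * 2 * (1 / 2) ^ (d + 1) ∧
    ‖Complex.exp ((p : ℂ) * Complex.log (1 + z))
        - ∑ k ∈ Finset.range (d + 1), (genBinom p k : ℂ) * z ^ k‖
      ≤ (1 / 2) ^ d := by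
  have hp1 : -1 ≤ p := by linarith
  have hterm (k : ℕ) (hk : d + 1 ≤ k) :
      ‖(genBinom p k : ℂ) * z ^ k‖ ≤ |genBinom p (d + 1)| * (1 / 2) ^ k := by
    rw [norm_mul, Complex.norm_real, Real.norm_eq_abs, norm_pow]
    exact mul_le_mul (abs_genBinom_le_of_le hp1 (by push_cast; linarith) hk)
      (pow_le_pow_left₀ (norm_nonneg z) hz k) (by positivity) (abs_nonneg _)
  have herror := norm_sub_sum_range_le_of_hasSum
    (hasSum_genBinom_mul_pow p (hz.trans_lt one_half_lt_one)) one_half_lt_one hterm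
  have hcoeff : |genBinom p (d + 1)| ≤ 1 :=
    (abs_genBinom_le_of_le hp1 (by norm_num; linarith) (by omega)).trans
      (abs_genBinom_two_le_one hp1 hp2.le)
  have hfirst := herror.trans_eq
    (show _ = |genBinom p (d + 1)| * 2 * (1 / 2) ^ (d + 1) by ring)
  refine ⟨hfirst, hfirst.trans ?_⟩
  calc |genBinom p (d + 1)| * 2 * (1 / 2) ^ (d + 1) ≤ 1 * 2 * (1 / 2) ^ (d + 1) := by gcongr
    _ = (1 / 2) ^ d := by ring
end
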